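/- arXiv:1609.04535 — 3 statements merged into one kernel-verified Lean document; each statement's English description precedes it below -/
import Mathlib

section
/- For real constants a > 0, b > 0, c > 0, the function x ↦ log(1 + a/(b + c·x)) is convex on the interval [0, ∞). -/
/-!
On `t > 0` the derivative of `t ↦ log (1 + a / t)` is `-a / (t * (t + a))`, which increases with
`t` when `a ≥ 0`; so this function is convex there, and precomposing it with the affine map
`x ↦ b + c * x`, which sends `[0, ∞)` into `(0, ∞)`, keeps it convex.
-/

open Real Set

lemma hasDerivAt_log_one_add_div {a t : ℝ} (ht : t ≠ 0) (hta : t + a ≠ 0) :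
    HasDerivAt (fun t => log (1 + a / t)) (-a / (t * (t + a))) t := by
  have hquot : HasDerivAt (fun t => 1 + a / t) (-a / t ^ 2) t := by
    simpa [div_eq_mul_inv] using ((hasDerivAt_inv ht).const_mul a).const_add 1
  have hpos : 1 + a / t ≠ 0 := by
    rw [one_add_div ht]
    exact div_ne_zero hta ht
  convert hquot.log hpos using 1
  field_simp

lemma convexOn_log_one_add_div {a : ℝ} (ha : 0 ≤ a) :
    ConvexOn ℝ (Ioi 0) (fun t => log (1 + a / t)) := by
  have hderiv : ∀ t ∈ Ioi (0 : ℝ),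
      HasDerivAt (fun t => log (1 + a / t)) (-a / (t * (t + a))) t := fun t (ht : 0 < t) =>
    hasDerivAt_log_one_add_div ht.ne' (by positivity)
  have hdiff : DifferentiableOn ℝ (fun t => log (1 + a / t)) (Ioi 0) := fun t ht =>
    (hderiv t ht).differentiableAt.differentiableWithinAt
  refine MonotoneOn.convexOn_of_deriv (convex_Ioi 0) hdiff.continuousOn
    (by rwa [interior_Ioi]) ?_
  rw [interior_Ioi]
  intro s (hs : 0 < s) t (ht : 0 < t) hst
  rw [(hderiv s hs).deriv, (hderiv t ht).deriv, neg_div, neg_div, neg_le_neg_iff]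
  gcongr

/-- For a, b, c > 0, the function x ↦ log(1 + a/(b + c·x)) is convex on [0, ∞). -/
theorem interfered_rate_convexOn (a b c : ℝ)
    (ha : 0 < a) (hb : 0 < b) (hc : 0 < c) :
    ConvexOn ℝ (Set.Ici (0 : ℝ))
      (fun x : ℝ => Real.log (1 + a / (b + c * x))) := by
  let φ : ℝ →ᵃ[ℝ] ℝ := ⟨fun x => b + c * x, c • LinearMap.id, fun x v => by
    simp only [vadd_eq_add, LinearMap.smul_apply, LinearMap.id_coe, id_eq, smul_eq_mul]
    ring⟩
  refine ((convexOn_log_one_add_div ha.le).comp_affineMap φ).subset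
    (fun x (hx : 0 ≤ x) => ?_) (convex_Ici 0)
  show 0 < b + c * x
  positivity
end

section
/- Let N ≥ 1, let i_n > 0 for n = 1,…,N, let F : ℝ^N → ℝ be convex and differentiable on the nonnegative orthant, set R_k(x) = ∑_{n=1}^N log₂(1 + x_n/i_n) + F(x), and R̃(x; y) = ∑_{n=1}^N log₂(1 + x_n/i_n) + F(y) + ∇F(y)·(x − y). Let S be a subset of the nonnegative orthant, let y ∈ S, and suppose x* ∈ S maximizes R̃(·; y) over S. Then R_k(x*) ≥ R_k(y); that is, the solution of the approximated distributed problem is a better response: it cannot decrease the exact sum rate. -/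
open Set

/-- Restricting `f` to the segment `[y, x]` reduces this to the one-variable fact that the
derivative at the left endpoint bounds the slope of every chord. -/
theorem ConvexOn.add_fderiv_sub_le {E : Type*} [NormedAddCommGroup E] [NormedSpace ℝ E]
    {s : Set E} {f : E → ℝ} {f' : E →L[ℝ] ℝ} (hf : ConvexOn ℝ s f) {x y : E}
    (hy : y ∈ s) (hx : x ∈ s) (hfy : HasFDerivWithinAt f f' s y) :
    f y + f' (x - y) ≤ f x := by
  let γ : ℝ →ᵃ[ℝ] E := AffineMap.lineMap y x
  have hγ : MapsTo γ (Icc 0 1) s := fun t ht => hf.1.lineMap_mem hy hx ht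
  have hconv : ConvexOn ℝ (Icc 0 1) (f ∘ γ) :=
    (hf.comp_affineMap γ).subset hγ (convex_Icc 0 1)
  have hderiv : HasDerivWithinAt (f ∘ γ) (f' (x - y)) (Icc 0 1) 0 := by
    have hfγ0 : HasFDerivWithinAt f f' s (γ 0) := by simpa [γ] using hfy
    simpa using hfγ0.comp_hasDerivWithinAt 0 AffineMap.hasDerivWithinAt_lineMap hγ
  have hslope := hconv.le_slope_of_hasDerivWithinAt (by simp) (by simp) one_pos hderiv
  simp only [slope_def_field, Function.comp_apply, γ, AffineMap.lineMap_apply_zero,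
    AffineMap.lineMap_apply_one, sub_zero, div_one] at hslope
  linarith

theorem approx_maximizer_is_better_response_general (N : ℕ)
    (i : Fin N → ℝ)
    (F : (Fin N → ℝ) → ℝ) (F' : (Fin N → ℝ) → ((Fin N → ℝ) →L[ℝ] ℝ))
    (hconv : ConvexOn ℝ {p : Fin N → ℝ | ∀ n, 0 ≤ p n} F)
    (hdiff : ∀ y ∈ {p : Fin N → ℝ | ∀ n, 0 ≤ p n},
      HasFDerivWithinAt F (F' y) {p : Fin N → ℝ | ∀ n, 0 ≤ p n} y)
    (Rk : (Fin N → ℝ) → ℝ)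
    (hRk : ∀ x, Rk x = (∑ n, Real.logb 2 (1 + x n / i n)) + F x)
    (Rt : (Fin N → ℝ) → (Fin N → ℝ) → ℝ)
    (hRt : ∀ x y, Rt x y
      = (∑ n, Real.logb 2 (1 + x n / i n)) + F y + F' y (x - y))
    (S : Set (Fin N → ℝ)) (hS : S ⊆ {p : Fin N → ℝ | ∀ n, 0 ≤ p n})
    (y : Fin N → ℝ) (hy : y ∈ S)
    (xstar : Fin N → ℝ) (hxstar : xstar ∈ S)
    (hmax : ∀ z ∈ S, Rt z y ≤ Rt xstar y) :
    Rk y ≤ Rk xstar := by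
  have hexact_at_base : Rk y = Rt y y := by simp [hRk, hRt]
  have hminorant : Rt xstar y ≤ Rk xstar := by
    have htangent := hconv.add_fderiv_sub_le (hS hy) (hS hxstar) (hdiff y (hS hy))
    rw [hRk, hRt]
    linarith
  calc Rk y = Rt y y := hexact_at_base
    _ ≤ Rt xstar y := hmax y hy
    _ ≤ Rk xstar := hminorant

/-- The solution of the approximated distributed problem is a better response:
if x* maximizes the linearized objective R̃(·;y) over a feasible set S contained
in the nonnegative orthant and containing the base point y, then the exact sum
rate does not decrease: R_k(x*) ≥ R_k(y). -/
theorem approx_maximizer_is_better_response (N : ℕ) (hN : 1 ≤ N)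
    (i : Fin N → ℝ) (hi : ∀ n, 0 < i n)
    (F : (Fin N → ℝ) → ℝ) (F' : (Fin N → ℝ) → ((Fin N → ℝ) →L[ℝ] ℝ))
    (hconv : ConvexOn ℝ {p : Fin N → ℝ | ∀ n, 0 ≤ p n} F)
    (hdiff : ∀ y ∈ {p : Fin N → ℝ | ∀ n, 0 ≤ p n},
      HasFDerivWithinAt F (F' y) {p : Fin N → ℝ | ∀ n, 0 ≤ p n} y)
    (Rk : (Fin N → ℝ) → ℝ)
    (hRk : ∀ x, Rk x = (∑ n, Real.logb 2 (1 + x n / i n)) + F x)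
    (Rt : (Fin N → ℝ) → (Fin N → ℝ) → ℝ)
    (hRt : ∀ x y, Rt x y
      = (∑ n, Real.logb 2 (1 + x n / i n)) + F y + F' y (x - y))
    (S : Set (Fin N → ℝ)) (hS : S ⊆ {p : Fin N → ℝ | ∀ n, 0 ≤ p n})
    (y : Fin N → ℝ) (hy : y ∈ S)
    (xstar : Fin N → ℝ) (hxstar : xstar ∈ S)
    (hmax : ∀ z ∈ S, Rt z y ≤ Rt xstar y) :
    Rk y ≤ Rk xstar :=
  approx_maximizer_is_better_response_general N i F F' hconv hdiff Rk hRk Rt hRt S hS y hy xstar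
    hxstar hmax
end

section
/- (Appendix A, inactive total-power constraint) Let N ≥ 1, i_n > 0, α_n < 0, P_n > 0 for n = 1,…,N, and P > 0. Define p*_n = min(max(−1/(ln 2 · α_n) − i_n, 0), P_n), and suppose ∑_{n=1}^N p*_n ≤ P. Then p* maximizes f(p) = ∑_{n=1}^N [log₂(1 + p_n/i_n) + α_n p_n] over the feasible set {p ∈ ℝ^N : 0 ≤ p_n ≤ P_n for all n, and ∑_{n=1}^N p_n ≤ P}. -/
open Real

/-! The objective separates over subcarriers, and each summand
`g(x) = log₂(1 + x/i) + α x` is concave with stationary point `c = -1/(ln 2 · α) - i`.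
By concavity, `g x - g s ≤ g'(s) (x - s)`, and since `α = -1/((i + c) ln 2)` one has
`g'(s) = (c - s) / ((i + s)(i + c) ln 2)`. For `s` the projection of `c` onto `[0, Pₙ]`,
`(x - s)(c - s) ≤ 0` for every `x ∈ [0, Pₙ]`, so `s` maximizes `g` there. -/

lemma mul_sub_clamp_nonpos {lo hi c x : ℝ} (hlo : lo ≤ x) (hhi : x ≤ hi) :
    (x - min (max c lo) hi) * (c - min (max c lo) hi) ≤ 0 := by
  rcases le_total c lo with hc | hc
  · rw [max_eq_right hc, min_eq_left (hlo.trans hhi)]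
    nlinarith
  rcases le_total c hi with hc' | hc'
  · simp only [max_eq_left hc, min_eq_left hc', sub_self, mul_zero, le_refl]
  · rw [max_eq_left hc, min_eq_right hc']
    nlinarith

lemma log_sub_log_le_div {a b : ℝ} (ha : 0 < a) (hb : 0 < b) :
    log a - log b ≤ (a - b) / b := by
  have := log_le_sub_one_of_pos (div_pos ha hb)
  rwa [log_div ha.ne' hb.ne', div_sub_one hb.ne'] at this

lemma logb_two_one_add_div_sub_le {i x s : ℝ} (hi : 0 < i) (hx : 0 < i + x) (hs : 0 < i + s) :
    logb 2 (1 + x / i) - logb 2 (1 + s / i) ≤ (x - s) / ((i + s) * log 2) := by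
  have hxi : 1 + x / i = (i + x) / i := by field_simp
  have hsi : 1 + s / i = (i + s) / i := by field_simp
  have key := log_sub_log_le_div (div_pos hx hi) (div_pos hs hi)
  have hratio : ((i + x) / i - (i + s) / i) / ((i + s) / i) = (x - s) / (i + s) := by
    field_simp
    ring
  rw [hratio] at key
  rw [hxi, hsi, logb, logb, ← sub_div, ← div_div]
  exact div_le_div_of_nonneg_right key (log_pos one_lt_two).le

lemma logb_two_add_mul_le_of_clamp {i α Pm x : ℝ} (hi : 0 < i) (hα : α < 0)
    (hx0 : 0 ≤ x) (hxP : x ≤ Pm) :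
    logb 2 (1 + x / i) + α * x ≤
      logb 2 (1 + min (max (-(1 / (log 2 * α)) - i) 0) Pm / i)
        + α * min (max (-(1 / (log 2 * α)) - i) 0) Pm := by
  set c := -(1 / (log 2 * α)) - i with hc
  set s := min (max c 0) Pm
  have hL : 0 < log 2 := log_pos one_lt_two
  have hs0 : 0 ≤ s := le_min (le_max_right _ _) (hx0.trans hxP)
  have hic : 0 < i + c := by
    have : 0 < -(1 / (log 2 * α)) := neg_pos.2 (one_div_neg.2 (mul_neg_of_pos_of_neg hL hα))
    linarith
  have hα_eq : α = -(1 / ((i + c) * log 2)) := by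
    rw [hc, add_sub_cancel]
    field_simp
  have hderiv : (x - s) / ((i + s) * log 2) + α * (x - s)
      = (x - s) * (c - s) / ((i + s) * (i + c) * log 2) := by
    rw [hα_eq]
    field_simp
    ring
  have htangent := logb_two_one_add_div_sub_le hi (by linarith : 0 < i + x) (by linarith : 0 < i + s)
  have hproj : (x - s) * (c - s) / ((i + s) * (i + c) * log 2) ≤ 0 :=
    div_nonpos_of_nonpos_of_nonneg (mul_sub_clamp_nonpos hx0 hxP) (by positivity)
  linarith

theorem ADRMP_solution_inactive_constraint_general (N : ℕ)
    (i : Fin N → ℝ) (hi : ∀ n, 0 < i n)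
    (α : Fin N → ℝ) (hα : ∀ n, α n < 0)
    (Pmask : Fin N → ℝ)
    (P : ℝ)
    (pstar : Fin N → ℝ)
    (hpstar : ∀ n, pstar n
      = min (max (-(1 / (Real.log 2 * α n)) - i n) 0) (Pmask n)) :
    ∀ p : Fin N → ℝ, (∀ n, 0 ≤ p n ∧ p n ≤ Pmask n) → (∑ n, p n ≤ P) →
      ∑ n, (Real.logb 2 (1 + p n / i n) + α n * p n)
        ≤ ∑ n, (Real.logb 2 (1 + pstar n / i n) + α n * pstar n) := by
  intro p hp _
  refine Finset.sum_le_sum fun n _ => ?_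
  rw [hpstar n]
  exact logb_two_add_mul_le_of_clamp (hi n) (hα n) (hp n).1 (hp n).2

/-- Appendix A, inactive total-power constraint (μ = 0): if the clamped
power allocation p*ₙ = [−1/(ln 2 · αₙ) − iₙ]₀^{Pₙ} satisfies the total power
budget, then it maximizes the ADRMP objective over the feasible set. -/
theorem ADRMP_solution_inactive_constraint (N : ℕ) (hN : 1 ≤ N)
    (i : Fin N → ℝ) (hi : ∀ n, 0 < i n)
    (α : Fin N → ℝ) (hα : ∀ n, α n < 0)
    (Pmask : Fin N → ℝ) (hPmask : ∀ n, 0 < Pmask n)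
    (P : ℝ) (hP : 0 < P)
    (pstar : Fin N → ℝ)
    (hpstar : ∀ n, pstar n
      = min (max (-(1 / (Real.log 2 * α n)) - i n) 0) (Pmask n))
    (hsum : ∑ n, pstar n ≤ P) :
    ∀ p : Fin N → ℝ, (∀ n, 0 ≤ p n ∧ p n ≤ Pmask n) → (∑ n, p n ≤ P) →
      ∑ n, (Real.logb 2 (1 + p n / i n) + α n * p n)
        ≤ ∑ n, (Real.logb 2 (1 + pstar n / i n) + α n * pstar n) :=
  ADRMP_solution_inactive_constraint_general N i hi α hα Pmask P pstar hpstar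
end
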